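/- For every A ∈ SL(2,R), the matrix R_θ A (R_θ the rotation by θ) is elliptic (has non-real eigenvalues) if and only if θ modulo π lies outside the range of the map H_A(p) = p − Φ_A(p) on P^1. Moreover, if θ = H_A(p) then the logarithm of the spectral radius of R_θ A equals |log‖A v_p‖|. -/

import Mathlib

/-!
Write `A v_p = r_p v_{Φ p}`, where `|r_p| = ‖A v_p‖` and `r_p ≠ 0` as `A` is invertible. Then
`R_θ A v_p = r_p v_{θ + Φ p}` is parallel to `v_p` exactly when `θ + Φ p - p ∈ πℤ`, and every
nonzero vector is a multiple of some `v_p`; so `R_θ A` has a real eigenvector iff `θ ≡ H_A(p)`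
mod `π` for some `p`. For `θ = H_A(p)` the eigenvalue of `v_p` is `r_p`; as `det (R_θ A) = 1`
the other eigenvalue is `r_p⁻¹`, so the spectral radius is `max |r_p| |r_p|⁻¹`, whose logarithm
is `|log |r_p||`.
-/

open Real MeasureTheory intervalIntegral Matrix Polynomial

noncomputable section

/-- 2×2 real matrices. -/
abbrev Mat := Matrix (Fin 2) (Fin 2) ℝ

/-- The unit vector `v_p = (cos p, sin p)` spanning the line `ℓ_p ∈ P¹ = ℝ/πℤ`. -/
def vec (p : ℝ) : Fin 2 → ℝ := ![Real.cos p, Real.sin p]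

/-- Euclidean norm on ℝ². -/
def en (w : Fin 2 → ℝ) : ℝ := Real.sqrt (w 0 ^ 2 + w 1 ^ 2)

/-- Rotation matrix by angle θ. -/
def Rot (θ : ℝ) : Mat := !![Real.cos θ, -Real.sin θ; Real.sin θ, Real.cos θ]

/-- `parr w q` : the vector `w` is parallel to `v_q` (i.e. `w ∈ ℓ_q`). -/
def parr (w : Fin 2 → ℝ) (q : ℝ) : Prop := w 0 * Real.sin q - w 1 * Real.cos q = 0

/-- `IsLift A Φ` : `Φ : ℝ → ℝ` is a lift (mod π) of the projective action `Φ_A` of `A` on P¹. -/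
def IsLift (A : Mat) (Φ : ℝ → ℝ) : Prop := ∀ p : ℝ, parr (A.mulVec (vec p)) (Φ p)

/-- Operator (Euclidean) norm of a 2×2 matrix: sup of `‖A v_p‖` over the unit circle. -/
def opN (A : Mat) : ℝ := ⨆ p : ℝ, en (A.mulVec (vec p))

/-- Spectral radius of a real 2×2 matrix: the largest modulus of its complex eigenvalues. -/
def spectralRad (B : Mat) : ℝ :=
  sSup {x : ℝ | ∃ z : ℂ, (B.charpoly.map (algebraMap ℝ ℂ)).IsRoot z ∧ x = ‖z‖}

/-- The word product `R_θ A = (R_θ A₁)⋯(R_θ Aₙ)` of a list of matrices. -/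
def Wp (θ : ℝ) (l : List Mat) : Mat := (l.map fun B => Rot θ * B).prod

lemma rot_mulVec_vec (θ q : ℝ) : Rot θ *ᵥ vec q = vec (θ + q) := by
  ext i
  fin_cases i <;> simp [Rot, _root_.vec, mulVec, dotProduct, cos_add, sin_add]; ring

lemma det_rot (θ : ℝ) : (Rot θ).det = 1 := by
  rw [Rot, det_fin_two_of]
  linear_combination sin_sq_add_cos_sq θ

lemma vec_ne_zero (p : ℝ) : vec p ≠ 0 := by
  intro h
  have hcos : cos p = 0 := congrFun h 0
  have hsin : sin p = 0 := congrFun h 1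
  simpa [hcos, hsin] using sin_sq_add_cos_sq p

lemma vec_add_int_mul_pi (p : ℝ) (k : ℤ) : vec (p + k * π) = ((-1 : ℝ) ^ k) • vec p := by
  ext i
  fin_cases i <;> simp [_root_.vec, cos_add_int_mul_pi, sin_add_int_mul_pi]

lemma en_smul_vec (r q : ℝ) : en (r • vec q) = |r| := by
  have hsq : (r • vec q) 0 ^ 2 + (r • vec q) 1 ^ 2 = r ^ 2 := by
    simp only [_root_.vec, Pi.smul_apply, smul_eq_mul, Matrix.cons_val_zero, Matrix.cons_val_one]
    linear_combination r ^ 2 * sin_sq_add_cos_sq q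
  rw [en, hsq, sqrt_sq_eq_abs]

lemma eq_smul_vec_of_parr {w : Fin 2 → ℝ} {q : ℝ} (h : parr w q) :
    w = (w 0 * cos q + w 1 * sin q) • vec q := by
  have hcs := sin_sq_add_cos_sq q
  unfold parr at h
  ext i
  fin_cases i
  · simp only [_root_.vec, Pi.smul_apply, smul_eq_mul, Fin.zero_eta, Matrix.cons_val_zero]
    linear_combination sin q * h - w 0 * hcs
  · simp only [_root_.vec, Pi.smul_apply, smul_eq_mul, Fin.mk_one, Matrix.cons_val_one,
      Matrix.cons_val_zero]
    linear_combination -cos q * h - w 1 * hcs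

lemma exists_eq_smul_vec {w : Fin 2 → ℝ} (hw : w ≠ 0) :
    ∃ s : ℝ, s ≠ 0 ∧ ∃ p : ℝ, w = s • vec p := by
  set z : ℂ := ⟨w 0, w 1⟩
  have hz : z ≠ 0 := fun h => hw <| by
    ext i
    fin_cases i
    · simpa using congrArg Complex.re h
    · simpa using congrArg Complex.im h
  refine ⟨‖z‖, norm_ne_zero_iff.mpr hz, z.arg, ?_⟩
  ext i
  fin_cases i
  · exact (Complex.norm_mul_cos_arg z).symm
  · exact (Complex.norm_mul_sin_arg z).symm

lemma sin_sub_eq_zero_of_smul_vec_eq {r c a b : ℝ} (hr : r ≠ 0) (h : r • vec a = c • vec b) :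
    sin (a - b) = 0 := by
  have h0 : r * cos a = c * cos b := by simpa [_root_.vec] using congrFun h 0
  have h1 : r * sin a = c * sin b := by simpa [_root_.vec] using congrFun h 1
  have : r * sin (a - b) = 0 := by
    rw [sin_sub]
    linear_combination cos b * h1 - sin b * h0
  exact (mul_eq_zero.mp this).resolve_left hr

section Lift

variable {A : Mat} {Φ : ℝ → ℝ}

lemma IsLift.exists_mulVec_vec (hA : A.det ≠ 0) (hΦ : IsLift A Φ) (p : ℝ) :
    ∃ r ≠ 0, |r| = en (A *ᵥ vec p) ∧ A *ᵥ vec p = r • vec (Φ p) := by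
  set r := (A *ᵥ vec p) 0 * cos (Φ p) + (A *ᵥ vec p) 1 * sin (Φ p)
  have hAv : A *ᵥ vec p = r • vec (Φ p) := eq_smul_vec_of_parr (hΦ p)
  refine ⟨r, fun hr => vec_ne_zero p ?_, by rw [hAv, en_smul_vec], hAv⟩
  exact eq_zero_of_mulVec_eq_zero hA (by rw [hAv, hr, zero_smul])

lemma IsLift.rot_mul_mulVec_vec (hA : A.det ≠ 0) (hΦ : IsLift A Φ) (p : ℝ) :
    ∃ r ≠ 0, |r| = en (A *ᵥ vec p) ∧ ∀ θ, (Rot θ * A) *ᵥ vec p = r • vec (θ + Φ p) := by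
  obtain ⟨r, hr, habs, hAv⟩ := hΦ.exists_mulVec_vec hA p
  exact ⟨r, hr, habs, fun θ => by rw [← mulVec_mulVec, hAv, mulVec_smul, rot_mulVec_vec]⟩

lemma IsLift.exists_eigenvector_rot_mul_iff (hA : A.det ≠ 0) (hΦ : IsLift A Φ) (θ : ℝ) :
    (∃ (c : ℝ) (w : Fin 2 → ℝ), w ≠ 0 ∧ (Rot θ * A) *ᵥ w = c • w) ↔
      ∃ (p : ℝ) (k : ℤ), θ = p - Φ p + k * π := by
  constructor
  · rintro ⟨c, w, hw, heig⟩
    obtain ⟨s, hs, p, rfl⟩ := exists_eq_smul_vec hw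
    obtain ⟨r, hr, -, hmv⟩ := hΦ.rot_mul_mulVec_vec hA p
    have hline : r • vec (θ + Φ p) = c • vec p := by
      rw [mulVec_smul, hmv, smul_comm c] at heig
      exact smul_right_injective _ hs heig
    obtain ⟨k, hk⟩ := sin_eq_zero_iff.mp (sin_sub_eq_zero_of_smul_vec_eq hr hline)
    exact ⟨p, k, by linarith⟩
  · rintro ⟨p, k, rfl⟩
    obtain ⟨r, -, -, hmv⟩ := hΦ.rot_mul_mulVec_vec hA p
    refine ⟨r * (-1) ^ k, vec p, vec_ne_zero p, ?_⟩
    rw [hmv, show p - Φ p + k * π + Φ p = p + k * π by ring, vec_add_int_mul_pi, smul_smul]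

end Lift

section SpectralRadius

variable {B : Mat} {r : ℝ}

lemma trace_eq_add_inv_of_mulVec_eq_smul (hB : B.det = 1) {v : Fin 2 → ℝ} (hv : v ≠ 0)
    (h : B *ᵥ v = r • v) : r ≠ 0 ∧ B.trace = r + r⁻¹ := by
  have hroot : B.charpoly.eval r = 0 := by
    rw [eval_charpoly]
    exact exists_mulVec_eq_zero_iff.mp ⟨v, hv, by simp [sub_mulVec, h]⟩
  simp only [charpoly_fin_two, hB, eval_add, eval_sub, eval_pow, eval_mul, eval_X, eval_C] at hroot
  have hr : r ≠ 0 := by rintro rfl; simp at hroot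
  refine ⟨hr, ?_⟩
  field_simp
  linear_combination -hroot

lemma isRoot_charpoly_map_iff (hB : B.det = 1) (hr : r ≠ 0) (htr : B.trace = r + r⁻¹) (z : ℂ) :
    (B.charpoly.map (algebraMap ℝ ℂ)).IsRoot z ↔ z = r ∨ z = (r : ℂ)⁻¹ := by
  have hrC : (r : ℂ) ≠ 0 := by exact_mod_cast hr
  have hfactor : z ^ 2 - (r + (r : ℂ)⁻¹) * z + 1 = (z - r) * (z - (r : ℂ)⁻¹) := by
    field_simp
    ring
  simp only [charpoly_fin_two, hB, htr, IsRoot, eval_map, eval₂_add, eval₂_sub, eval₂_mul,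
    eval₂_pow, eval₂_X, eval₂_C, eval₂_one, map_add, map_inv₀, map_one, Complex.coe_algebraMap]
  rw [hfactor, mul_eq_zero, sub_eq_zero, sub_eq_zero]

lemma spectralRad_eq_max_of_mulVec_eq_smul (hB : B.det = 1) {v : Fin 2 → ℝ} (hv : v ≠ 0)
    (h : B *ᵥ v = r • v) : spectralRad B = max |r| |r|⁻¹ := by
  obtain ⟨hr, htr⟩ := trace_eq_add_inv_of_mulVec_eq_smul hB hv h
  have hmoduli : {x : ℝ | ∃ z : ℂ, (B.charpoly.map (algebraMap ℝ ℂ)).IsRoot z ∧ x = ‖z‖} =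
      {|r|, |r|⁻¹} := by
    ext x
    simp only [isRoot_charpoly_map_iff hB hr htr, Set.mem_insert_iff, Set.mem_singleton_iff]
    constructor
    · rintro ⟨z, rfl | rfl, rfl⟩ <;> simp
    · rintro (rfl | rfl)
      · exact ⟨r, Or.inl rfl, by simp⟩
      · exact ⟨(r : ℂ)⁻¹, Or.inr rfl, by simp⟩
  rw [spectralRad, hmoduli, csSup_pair]

end SpectralRadius

lemma log_max_inv {x : ℝ} (hx : 0 < x) : log (max x x⁻¹) = |log x| := by
  rw [(strictMonoOn_log.monotoneOn).map_max hx (inv_pos.mpr hx), log_inv, abs_eq_max_neg]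

theorem stmt7_general (A : Mat) (hdet : A.det = 1) (Φ : ℝ → ℝ)
    (hΦ : IsLift A Φ) :
    (∀ θ : ℝ,
      (¬ ∃ (c : ℝ) (w : Fin 2 → ℝ), w ≠ 0 ∧ (Rot θ * A).mulVec w = c • w)
        ↔ ∀ (p : ℝ) (k : ℤ), θ ≠ p - Φ p + k * π) ∧
    (∀ p : ℝ,
      Real.log (spectralRad (Rot (p - Φ p) * A)) = |Real.log (en (A.mulVec (vec p)))|) := by
  have hA : A.det ≠ 0 := by rw [hdet]; exact one_ne_zero
  refine ⟨fun θ => ?_, fun p => ?_⟩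
  · rw [hΦ.exists_eigenvector_rot_mul_iff hA θ]
    simp only [not_exists, ne_eq]
  · obtain ⟨r, hr, habs, hmv⟩ := hΦ.rot_mul_mulVec_vec hA p
    have hBdet : (Rot (p - Φ p) * A).det = 1 := by
      rw [det_mul, hdet, mul_one, det_rot]
    have heig : (Rot (p - Φ p) * A) *ᵥ vec p = r • vec p := by
      rw [hmv, sub_add_cancel]
    rw [spectralRad_eq_max_of_mulVec_eq_smul hBdet (vec_ne_zero p) heig,
      log_max_inv (abs_pos.mpr hr), habs]

/-- `R_θ A` is elliptic (no real eigenvector) iff `θ` (mod π) misses the range of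
`H_A(p) = p - Φ_A(p)`; and for `θ = H_A(p)` the log of the spectral radius of `R_θ A`
is `|log ‖A v_p‖|`. -/
theorem stmt7 (A : Mat) (hdet : A.det = 1) (Φ : ℝ → ℝ)
    (hΦc : Continuous Φ) (hΦ : IsLift A Φ) :
    (∀ θ : ℝ,
      (¬ ∃ (c : ℝ) (w : Fin 2 → ℝ), w ≠ 0 ∧ (Rot θ * A).mulVec w = c • w)
        ↔ ∀ (p : ℝ) (k : ℤ), θ ≠ p - Φ p + k * π) ∧
    (∀ p : ℝ,
      Real.log (spectralRad (Rot (p - Φ p) * A)) = |Real.log (en (A.mulVec (vec p)))|) :=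
  stmt7_general A hdet Φ hΦ
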